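/- arXiv:1804.04790 — 3 statements merged into one kernel-verified Lean document; each statement's English description precedes it below -/
import Mathlib

section
/- There exists an absolute constant c > 0 such that for every interval δ ⊆ [0,1) and every λ > 0, the Lebesgue measure of the set {x ∈ [0,1) : sup_{n≥1} |S̃_n(x, 1_δ)| > λ} is at most c·|δ|/λ. -/
open MeasureTheory Real Set

/-- Modified trigonometric partial sum of the indicator of `[α, β)`. -/
noncomputable def modPartialSumInd (n : ℕ) (α β x : ℝ) : ℝ :=
  ∫ t in α..β, Real.sin (2 * π * n * (x - t)) / (x - t)

lemma abs_sin_div_le_one (t : ℝ) : |Real.sin t / t| ≤ 1 := by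
  rcases eq_or_ne t 0 with h | h
  · simp [h]
  · rw [abs_div, div_le_one (abs_pos.mpr h)]
    exact Real.abs_sin_le_abs

lemma sinc_intervalIntegrable (a b : ℝ) :
    IntervalIntegrable (fun t => Real.sin t / t) volume a b := by
  apply IntervalIntegrable.mono_fun (_root_.intervalIntegrable_const (c := (1:ℝ)))
  · exact (Real.measurable_sin.div measurable_id).aestronglyMeasurable
  · refine Filter.Eventually.of_forall fun t => ?_
    simp only [Real.norm_eq_abs, norm_one]
    simpa using abs_sin_div_le_one t

lemma coscos_bound (x : ℝ) : ‖(-Real.cos x) * (-(x^2)⁻¹)‖ ≤ (x^2)⁻¹ := by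
  have : ‖(-Real.cos x) * (-(x^2)⁻¹)‖ = |Real.cos x| * (x^2)⁻¹ := by
    rw [norm_mul, norm_neg, norm_neg, Real.norm_eq_abs, Real.norm_eq_abs,
      abs_of_nonneg (inv_nonneg.mpr (sq_nonneg x))]
  rw [this]
  exact mul_le_of_le_one_left (inv_nonneg.mpr (sq_nonneg x)) (Real.abs_cos_le_one x)

lemma partA {a b : ℝ} (ha : 1 ≤ a) (hab : a ≤ b) :
    |∫ t in a..b, Real.sin t / t| ≤ 2 := by
  have ha0 : 0 < a := lt_of_lt_of_le one_pos ha
  have hb0 : 0 < b := lt_of_lt_of_le ha0 hab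
  have hmem : ∀ x ∈ Set.uIcc a b, 0 < x := by
    intro x hx
    rw [Set.uIcc_of_le hab] at hx
    exact lt_of_lt_of_le ha0 hx.1
  have hu : ∀ x ∈ Set.uIcc a b, HasDerivAt (fun t => -Real.cos t) (Real.sin x) x := by
    intro x _; exact (Real.hasDerivAt_cos x).neg.congr_deriv (neg_neg _)
  have hv : ∀ x ∈ Set.uIcc a b, HasDerivAt (fun t : ℝ => t⁻¹) (-(x^2)⁻¹) x := by
    intro x hx; exact hasDerivAt_inv (hmem x hx).ne'
  have hu' : IntervalIntegrable Real.sin volume a b :=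
    Real.continuous_sin.intervalIntegrable a b
  have hv' : IntervalIntegrable (fun x : ℝ => -(x^2)⁻¹) volume a b := by
    apply ContinuousOn.intervalIntegrable
    exact (((continuous_pow 2).continuousOn).inv₀
      (fun x hx => pow_ne_zero 2 (hmem x hx).ne')).neg
  have key := intervalIntegral.integral_mul_deriv_eq_deriv_mul hu hv hu' hv'
  have hzpow : ∫ x in a..b, (x^2)⁻¹ = a⁻¹ - b⁻¹ := by
    have h0 : (0:ℝ) ∉ Set.uIcc a b := fun h => absurd (hmem 0 h) (lt_irrefl 0)
    have h2 := integral_zpow (n := -2) (a := a) (b := b) (Or.inr ⟨by norm_num, h0⟩)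
    have hconv : ∀ x : ℝ, x ^ (-2 : ℤ) = (x^2)⁻¹ := by
      intro x; rw [zpow_neg]; norm_cast
    simp only [hconv] at h2
    rw [h2]
    have : ((-2 : ℤ) + 1 : ℝ) = -1 := by norm_num
    rw [show ((-2:ℤ) + 1 : ℤ) = -1 by norm_num] at h2 ⊢
    simp [zpow_neg]
    ring
  have hJ : |∫ x in a..b, (-Real.cos x) * (-(x^2)⁻¹)| ≤ a⁻¹ - b⁻¹ := by
    have hint : IntervalIntegrable (fun x : ℝ => (x^2)⁻¹) volume a b := by
      apply ContinuousOn.intervalIntegrable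
      exact ((continuous_pow 2).continuousOn).inv₀ (fun x hx => pow_ne_zero 2 (hmem x hx).ne')
    have h := intervalIntegral.norm_integral_le_abs_of_norm_le
      (μ := volume) (f := fun x => (-Real.cos x) * (-(x^2)⁻¹))
      (Filter.Eventually.of_forall fun t => coscos_bound t) hint
    rw [hzpow] at h
    have hnn : (0:ℝ) ≤ a⁻¹ - b⁻¹ := by
      have := inv_anti₀ ha0 hab
      linarith
    rwa [abs_of_nonneg hnn, Real.norm_eq_abs] at h
  -- key : ∫ (-cos x)*(-(x²)⁻¹) = (-cos b)*b⁻¹ - (-cos a)*a⁻¹ - ∫ sin x * x⁻¹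
  have hI : ∫ t in a..b, Real.sin t / t = ∫ t in a..b, Real.sin t * t⁻¹ := by
    simp [div_eq_mul_inv]
  rw [hI]
  have habs : |(-Real.cos b) * b⁻¹ - (-Real.cos a) * a⁻¹ -
      (∫ x in a..b, (-Real.cos x) * (-(x^2)⁻¹))| ≤ 2 := by
    have h1 : |(-Real.cos b) * b⁻¹| ≤ b⁻¹ := by
      rw [abs_mul, abs_neg, abs_of_nonneg (inv_nonneg.mpr hb0.le)]
      exact mul_le_of_le_one_left (inv_nonneg.mpr hb0.le) (Real.abs_cos_le_one b)
    have h2 : |(-Real.cos a) * a⁻¹| ≤ a⁻¹ := by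
      rw [abs_mul, abs_neg, abs_of_nonneg (inv_nonneg.mpr ha0.le)]
      exact mul_le_of_le_one_left (inv_nonneg.mpr ha0.le) (Real.abs_cos_le_one a)
    have hainv : a⁻¹ ≤ 1 := by
      rw [inv_le_one_iff₀]; right; exact ha
    have hbinv : b⁻¹ ≤ a⁻¹ := inv_anti₀ ha0 hab
    have hbinv0 : (0:ℝ) ≤ b⁻¹ := inv_nonneg.mpr hb0.le
    have := abs_sub (      (-Real.cos b) * b⁻¹ - (-Real.cos a) * a⁻¹) (∫ x in a..b, (-Real.cos x) * (-(x^2)⁻¹))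
    calc |(-Real.cos b) * b⁻¹ - (-Real.cos a) * a⁻¹ -
        (∫ x in a..b, (-Real.cos x) * (-(x^2)⁻¹))|
        ≤ |(-Real.cos b) * b⁻¹| + |(-Real.cos a) * a⁻¹| +
          |∫ x in a..b, (-Real.cos x) * (-(x^2)⁻¹)| := by
          have t1 := abs_sub ((-Real.cos b) * b⁻¹ - (-Real.cos a) * a⁻¹)
            (∫ x in a..b, (-Real.cos x) * (-(x^2)⁻¹))
          have t2 := abs_sub ((-Real.cos b) * b⁻¹) ((-Real.cos a) * a⁻¹)
          linarith
      _ ≤ b⁻¹ + a⁻¹ + (a⁻¹ - b⁻¹) := by linarith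
      _ = 2 * a⁻¹ := by ring
      _ ≤ 2 := by linarith
  have : (∫ x in a..b, Real.sin x * x⁻¹) =
      (-Real.cos b) * b⁻¹ - (-Real.cos a) * a⁻¹ -
      (∫ x in a..b, (-Real.cos x) * (-(x^2)⁻¹)) := by linarith [key]
  rw [this]
  exact habs

lemma partB {a b : ℝ} (ha : 0 ≤ a) (hab : a ≤ b) :
    |∫ t in a..b, Real.sin t / t| ≤ 3 := by
  have hsmall : ∀ u v : ℝ, u ≤ v → |∫ t in u..v, Real.sin t / t| ≤ v - u := by
    intro u v huv
    have h := intervalIntegral.norm_integral_le_of_norm_le_const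
      (a := u) (b := v) (C := 1) (f := fun t => Real.sin t / t)
      (fun t _ => by rw [Real.norm_eq_abs]; exact abs_sin_div_le_one t)
    rw [Real.norm_eq_abs] at h
    calc |∫ t in u..v, Real.sin t / t| ≤ 1 * |v - u| := h
      _ = v - u := by rw [one_mul, abs_of_nonneg (by linarith)]
  rcases le_or_gt b 1 with hb1 | hb1
  · have := hsmall a b hab
    linarith [this, hab, ha, hb1]
  rcases le_or_gt 1 a with ha1 | ha1
  · linarith [partA ha1 hab]
  · have hsplit : (∫ t in a..(1:ℝ), Real.sin t / t) + (∫ t in (1:ℝ)..b, Real.sin t / t)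
        = ∫ t in a..b, Real.sin t / t :=
      intervalIntegral.integral_add_adjacent_intervals
        (sinc_intervalIntegrable a 1) (sinc_intervalIntegrable 1 b)
    have h1 := hsmall a 1 ha1.le
    have h2 := partA (le_refl (1:ℝ)) hb1.le
    rw [← hsplit]
    calc |(∫ t in a..(1:ℝ), Real.sin t / t) + (∫ t in (1:ℝ)..b, Real.sin t / t)|
        ≤ |∫ t in a..(1:ℝ), Real.sin t / t| + |∫ t in (1:ℝ)..b, Real.sin t / t| := abs_add_le _ _
      _ ≤ 3 := by linarith

lemma partB' {a b : ℝ} (hb : b ≤ 0) (hab : a ≤ b) :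
    |∫ t in a..b, Real.sin t / t| ≤ 3 := by
  have hneg : (∫ t in a..b, Real.sin t / t)
      = ∫ t in (-b)..(-a), Real.sin t / t := by
    rw [← intervalIntegral.integral_comp_neg (fun t => Real.sin t / t)]
    congr 1
    ext x
    rw [Real.sin_neg, neg_div_neg_eq]
  rw [hneg]
  exact partB (by linarith) (by linarith)

lemma partC (a b : ℝ) : |∫ t in a..b, Real.sin t / t| ≤ 6 := by
  have main : ∀ u v : ℝ, u ≤ v → |∫ t in u..v, Real.sin t / t| ≤ 6 := by
    intro u v huv
    rcases le_or_gt 0 u with hu | hu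
    · linarith [partB hu huv]
    rcases le_or_gt v 0 with hv | hv
    · linarith [partB' hv huv]
    · have hsplit : (∫ t in u..(0:ℝ), Real.sin t / t) + (∫ t in (0:ℝ)..v, Real.sin t / t)
          = ∫ t in u..v, Real.sin t / t :=
        intervalIntegral.integral_add_adjacent_intervals
          (sinc_intervalIntegrable u 0) (sinc_intervalIntegrable 0 v)
      have h1 := partB' (le_refl (0:ℝ)) hu.le
      have h2 := partB (le_refl (0:ℝ)) hv.le
      rw [← hsplit]
      calc |(∫ t in u..(0:ℝ), Real.sin t / t) + (∫ t in (0:ℝ)..v, Real.sin t / t)|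
          ≤ |∫ t in u..(0:ℝ), Real.sin t / t| + |∫ t in (0:ℝ)..v, Real.sin t / t| := abs_add_le _ _
        _ ≤ 6 := by linarith
  rcases le_or_gt a b with h | h
  · exact main a b h
  · rw [intervalIntegral.integral_symm, abs_neg]
    exact main b a h.le

lemma conv (c x α β : ℝ) (hc : c ≠ 0) :
    (∫ t in α..β, Real.sin (c * (x - t)) / (x - t))
      = ∫ v in (c * (x - β))..(c * (x - α)), Real.sin v / v := by
  have h1 : (∫ t in α..β, Real.sin (c * (x - t)) / (x - t))
      = ∫ u in (x - β)..(x - α), Real.sin (c * u) / u :=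
    intervalIntegral.integral_comp_sub_left (fun u => Real.sin (c * u) / u) x
  rw [h1]
  have h2 : ∀ u : ℝ, Real.sin (c * u) / u = c * (Real.sin (c * u) / (c * u)) := by
    intro u
    rcases eq_or_ne u 0 with h | h
    · simp [h]
    · field_simp
  simp_rw [h2]
  rw [intervalIntegral.integral_const_mul]
  have := intervalIntegral.smul_integral_comp_mul_left
    (fun v => Real.sin v / v) (a := x - β) (b := x - α) c
  rw [← this]
  simp [smul_eq_mul]

lemma mod_bound6 {n : ℕ} (hn : 1 ≤ n) (α β x : ℝ) :
    |modPartialSumInd n α β x| ≤ 6 := by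
  have hn0 : (0:ℝ) < n := by exact_mod_cast hn
  have hc : (2 * π * n : ℝ) ≠ 0 := by positivity
  rw [modPartialSumInd, conv _ _ _ _ hc]
  exact partC _ _

lemma mod_bound_far {n : ℕ} {α β x r : ℝ} (hr : 0 < r) (hαβ : α ≤ β)
    (hx : x ≤ α - r ∨ β + r ≤ x) :
    |modPartialSumInd n α β x| ≤ (β - α) / r := by
  have key : ∀ t ∈ Set.uIoc α β, ‖Real.sin (2 * π * n * (x - t)) / (x - t)‖ ≤ 1 / r := by
    intro t ht
    rw [Set.uIoc_of_le hαβ] at ht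
    have hdist : r ≤ |x - t| := by
      rcases hx with h | h
      · rw [abs_sub_comm, abs_of_nonneg (by linarith [ht.1] : (0:ℝ) ≤ t - x)]
        linarith [ht.1]
      · rw [abs_of_nonneg (by linarith [ht.2] : (0:ℝ) ≤ x - t)]
        linarith [ht.2]
    rw [Real.norm_eq_abs, abs_div]
    have hxt : (0:ℝ) < |x - t| := lt_of_lt_of_le hr hdist
    rw [div_le_div_iff₀ hxt hr]
    calc |Real.sin (2 * π * n * (x - t))| * r ≤ 1 * r := by
          exact mul_le_mul_of_nonneg_right (Real.abs_sin_le_one _) hr.le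
      _ = r := one_mul r
      _ ≤ |x - t| := hdist
      _ = |x - t| * 1 := (mul_one _).symm
      _ = 1 * |x - t| := by ring
  have h := intervalIntegral.norm_integral_le_of_norm_le_const key
  rw [Real.norm_eq_abs] at h
  calc |modPartialSumInd n α β x| ≤ 1 / r * |β - α| := h
    _ = (β - α) / r := by rw [abs_of_nonneg (by linarith), one_div, inv_mul_eq_div, div_eq_mul_inv]

theorem stmt2 :
    ∃ c : ℝ, 0 < c ∧
      ∀ α β : ℝ, 0 ≤ α → α < β → β ≤ 1 →
        ∀ lam : ℝ, 0 < lam →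
          volume {x ∈ Set.Ico (0 : ℝ) 1 |
              ∃ n : ℕ, 1 ≤ n ∧ lam < |modPartialSumInd n α β x|} ≤
            ENNReal.ofReal (c * (β - α) / lam) := by
  refine ⟨8, by norm_num, fun α β hα hαβ hβ lam hlam => ?_⟩
  set E := {x ∈ Set.Ico (0 : ℝ) 1 |
      ∃ n : ℕ, 1 ≤ n ∧ lam < |modPartialSumInd n α β x|} with hE
  rcases le_or_gt 6 lam with hl6 | hl6
  · have hempty : E = ∅ := by
      rw [Set.eq_empty_iff_forall_notMem]
      rintro x ⟨-, n, hn, hlt⟩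
      exact absurd (mod_bound6 hn α β x) (by linarith)
    rw [hempty, measure_empty]
    exact zero_le
  · set r := (β - α) / lam with hr
    have hβα : (0:ℝ) < β - α := by linarith
    have hrpos : 0 < r := div_pos hβα hlam
    have hsub : E ⊆ Set.Ioo (α - r) (β + r) := by
      rintro x ⟨-, n, hn, hlt⟩
      by_contra hx
      rw [Set.mem_Ioo, not_and_or] at hx
      have hx' : x ≤ α - r ∨ β + r ≤ x := by
        rcases hx with h | h
        · left; linarith [not_lt.mp h]
        · right; linarith [not_lt.mp h]
      have := mod_bound_far (n := n) hrpos hαβ.le hx'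
      have heq : (β - α) / r = lam := by
        rw [hr]; field_simp
      rw [heq] at this
      linarith
    calc volume E ≤ volume (Set.Ioo (α - r) (β + r)) := measure_mono hsub
      _ = ENNReal.ofReal ((β + r) - (α - r)) := Real.volume_Ioo
      _ ≤ ENNReal.ofReal (8 * (β - α) / lam) := by
          apply ENNReal.ofReal_le_ofReal
          rw [show (8:ℝ) * (β - α) / lam = 8 * ((β - α) / lam) by ring, ← hr]
          have hrl : r * lam = β - α := by
            rw [hr, div_mul_cancel₀ _ hlam.ne']
          nlinarith [hrl, hβα, hl6, hlam, hrpos]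
end

section
/- Let d > 0, ν ≥ 1 an integer, 0 < |n*| ≤ 1/(2d), and let t_j = a − d/2 + dj. There is an absolute constant C such that for any k with 1 ≤ k ≤ l, |∑_{j∈{1,…,l}: |j−k| > ν} e^{−2πi n* t_j}/(t_k − t_j)| ≤ C/((ν+1)d |sin(π d n*)|), and hence if ν = ⌊1/(d|n*|)⌋ this quantity is at most C'/d for an absolute constant C'. -/
open Real

lemma abs_exp_theta_sub_one (θ : ℝ) :
    ‖Complex.exp (θ * Complex.I) - 1‖ = 2 * |Real.sin (θ / 2)| := by
  have hre : (Complex.exp (θ * Complex.I) - 1).re = Real.cos θ - 1 := by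
    simp [Complex.exp_ofReal_mul_I_re]
  have him : (Complex.exp (θ * Complex.I) - 1).im = Real.sin θ := by
    simp [Complex.exp_ofReal_mul_I_im]
  rw [Complex.norm_def, Complex.normSq_apply, hre, him]
  have h1 : Real.sin (θ/2)^2 + Real.cos (θ/2)^2 = 1 := Real.sin_sq_add_cos_sq _
  have h2 : Real.cos θ = 2 * Real.cos (θ/2)^2 - 1 := by
    rw [show θ = 2*(θ/2) by ring, Real.cos_two_mul]
    ring_nf
  have hs : Real.sin θ = 2 * Real.sin (θ/2) * Real.cos (θ/2) := by
    rw [show θ = 2*(θ/2) by ring, Real.sin_two_mul]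
    ring_nf
  have key : (Real.cos θ - 1)*(Real.cos θ - 1) + Real.sin θ * Real.sin θ
      = (2*|Real.sin (θ/2)|)^2 := by
    rw [hs, h2, mul_pow, sq_abs]
    linear_combination (4 * Real.cos (θ/2)^2 - 4) * h1
  rw [key, Real.sqrt_sq (by positivity)]

lemma abel_bound (c : ℕ → ℝ) (g : ℕ → ℂ) (B : ℝ) (n : ℕ)
    (hB : ∀ q : ℕ, ‖∑ i ∈ Finset.range q, g i‖ ≤ B) :
    ‖∑ i ∈ Finset.range n, (c i : ℂ) * g i‖ ≤
      B * (|c (n-1)| + ∑ i ∈ Finset.range (n-1), |c (i+1) - c i|) := by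
  have hB0 : 0 ≤ B := by simpa using hB 0
  have key := Finset.sum_range_by_parts (fun i => (c i : ℂ)) g n
  simp only [smul_eq_mul] at key
  rw [key]
  have h1 : ‖(c (n-1) : ℂ) * ∑ i ∈ Finset.range n, g i‖ ≤ |c (n-1)| * B := by
    rw [norm_mul, Complex.norm_real, Real.norm_eq_abs]
    exact mul_le_mul_of_nonneg_left (hB n) (abs_nonneg _)
  have h2 : ‖∑ i ∈ Finset.range (n-1), ((c (i+1) : ℂ) - c i) * ∑ j ∈ Finset.range (i+1), g j‖
      ≤ ∑ i ∈ Finset.range (n-1), |c (i+1) - c i| * B := by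
    refine le_trans (norm_sum_le _ _) (Finset.sum_le_sum fun i _ => ?_)
    rw [norm_mul]
    have : ((c (i+1) : ℂ) - c i) = ((c (i+1) - c i : ℝ) : ℂ) := by push_cast; ring
    rw [this, Complex.norm_real, Real.norm_eq_abs]
    exact mul_le_mul_of_nonneg_left (hB _) (abs_nonneg _)
  calc ‖_ - _‖ ≤ _ := norm_sub_le _ _
    _ ≤ |c (n-1)| * B + ∑ i ∈ Finset.range (n-1), |c (i+1) - c i| * B := add_le_add h1 h2
    _ = B * (|c (n-1)| + ∑ i ∈ Finset.range (n-1), |c (i+1) - c i|) := by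
        rw [← Finset.sum_mul]; ring

lemma side_bound (E w : ℂ) (hE : ‖E‖ = 1) (hw : ‖w‖ = 1) (hw1 : w ≠ 1)
    (c : ℕ → ℝ) (n : ℕ) (M : ℝ)
    (hM : |c (n-1)| + ∑ i ∈ Finset.range (n-1), |c (i+1) - c i| ≤ M) :
    ‖∑ i ∈ Finset.range n, (c i : ℂ) * (E * w^i)‖ ≤ (2 / ‖w-1‖) * M := by
  have hw0 : 0 < ‖w - 1‖ := by
    exact norm_pos_iff.2 (sub_ne_zero.2 hw1)
  have hB : ∀ q : ℕ, ‖∑ i ∈ Finset.range q, E * w ^ i‖ ≤ 2 / ‖w-1‖ := by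
    intro q
    rw [← Finset.mul_sum, geom_sum_eq hw1 q, norm_mul, norm_div, hE,
      one_mul]
    gcongr
    calc ‖w^q - 1‖ ≤ ‖w^q‖ + ‖(1 : ℂ)‖ := norm_sub_le _ _
      _ = 2 := by rw [norm_pow, hw, one_pow, norm_one]; norm_num
  have := abel_bound c (fun i => E * w^i) _ n hB
  exact le_trans this (mul_le_mul_of_nonneg_left hM (by positivity))

lemma interval_side_bound (E0 w : ℂ) (hE0 : ‖E0‖ = 1) (hw : ‖w‖ = 1)
    (hw1 : w ≠ 1) (c' : ℕ → ℝ) (m N : ℕ) (M : ℝ)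
    (hM : |c' (m + (N - m - 1))| +
        ∑ i ∈ Finset.range (N - m - 1), |c' (m + (i+1)) - c' (m+i)| ≤ M) :
    ‖∑ j ∈ Finset.Ico m N, (c' j : ℂ) * (E0 * w ^ j)‖ ≤ (2 / ‖w-1‖) * M := by
  rw [Finset.sum_Ico_eq_sum_range]
  have hE : ‖E0 * w ^ m‖ = 1 := by
    rw [norm_mul, norm_pow, hE0, hw, one_pow, one_mul]
  have h := side_bound (E0 * w^m) w hE hw hw1 (fun i => c' (m+i)) (N-m) M (by simpa using hM)
  refine le_trans (le_of_eq ?_) h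
  refine congrArg _ (Finset.sum_congr rfl fun i _ => ?_)
  rw [pow_add]; ring


lemma right_hM (d : ℝ) (hd : 0 < d) (k ν P : ℕ) (c : ℕ → ℝ)
    (hc : ∀ j : ℕ, c j = 1/(d*((k:ℝ)-(j:ℝ)))) :
    |c ((k+ν+1) + P)| + ∑ i ∈ Finset.range P, |c ((k+ν+1)+(i+1)) - c ((k+ν+1)+i)|
      ≤ 2/(d*((ν:ℝ)+1)) := by
  set f : ℕ → ℝ := fun i => 1/(d*((ν:ℝ)+1+(i:ℝ))) with hf_def
  have hf0 : ∀ i : ℕ, 0 ≤ f i := by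
    intro i; rw [hf_def]; positivity
  have hval : ∀ i : ℕ, c ((k+ν+1)+i) = -(f i) := by
    intro i
    rw [hc, hf_def]
    have h : (((k+ν+1)+i : ℕ) : ℝ) = (k:ℝ)+(ν:ℝ)+1+(i:ℝ) := by push_cast; ring
    rw [h, show (k:ℝ) - ((k:ℝ)+(ν:ℝ)+1+(i:ℝ)) = -((ν:ℝ)+1+(i:ℝ)) by ring, mul_neg, div_neg]
  have habs : ∀ i ∈ Finset.range P, |c ((k+ν+1)+(i+1)) - c ((k+ν+1)+i)| = f i - f (i+1) := by
    intro i _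
    have h1 : (0:ℝ) < d*((ν:ℝ)+1+(i:ℝ)) := by positivity
    have h2 : d*((ν:ℝ)+1+(i:ℝ)) ≤ d*((ν:ℝ)+1+((i+1:ℕ):ℝ)) := by
      have hi : ((i:ℝ)) ≤ ((i+1:ℕ):ℝ) := by push_cast; linarith
      nlinarith
    have h3 : f (i+1) ≤ f i := by
      rw [hf_def]
      exact one_div_le_one_div_of_le h1 h2
    rw [hval, hval, show -(f (i+1)) - -(f i) = f i - f (i+1) by ring,
      abs_of_nonneg (by linarith)]
  rw [hval, Finset.sum_congr rfl habs, Finset.sum_range_sub' f P, abs_neg,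
    abs_of_nonneg (hf0 P)]
  have hfz : f 0 = 1/(d*((ν:ℝ)+1)) := by rw [hf_def]; norm_num
  have h4 : 0 ≤ 1/(d*((ν:ℝ)+1)) := by positivity
  have e : f P + (f 0 - f P) = f 0 := by ring
  rw [e, hfz, show (2:ℝ)/(d*((ν:ℝ)+1)) = 2*(1/(d*((ν:ℝ)+1))) by ring]
  linarith

lemma left_hM (d : ℝ) (hd : 0 < d) (k ν P : ℕ) (hν : 1 ≤ ν) (hP : P = k - ν - 1 - 1)
    (hk : ν + 2 ≤ k) (c : ℕ → ℝ)
    (hc : ∀ j : ℕ, c j = 1/(d*((k:ℝ)-(j:ℝ)))) :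
    |c (1 + P)| + ∑ i ∈ Finset.range P, |c (1+(i+1)) - c (1+i)| ≤ 2/(d*((ν:ℝ)+1)) := by
  set g : ℕ → ℝ := fun i => 1/(d*((k:ℝ) - 1 - (i:ℝ))) with hg_def
  have hvalL : ∀ i : ℕ, c (1+i) = g i := by
    intro i
    rw [hc, hg_def]
    have h : ((1+i : ℕ) : ℝ) = 1+(i:ℝ) := by push_cast; ring
    rw [h, show (k:ℝ) - (1+(i:ℝ)) = (k:ℝ) - 1 - (i:ℝ) by ring]
  have habsL : ∀ i ∈ Finset.range P, |c (1+(i+1)) - c (1+i)| = g (i+1) - g i := by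
    intro i hi
    rw [Finset.mem_range, hP] at hi
    have hik : i + 3 ≤ k := by omega
    have hikR : (i:ℝ) + 3 ≤ (k:ℝ) := by exact_mod_cast hik
    have hcast : ((i+1:ℕ):ℝ) = (i:ℝ)+1 := by push_cast; ring
    have h1 : (0:ℝ) < d*((k:ℝ)-1-((i+1:ℕ):ℝ)) := by
      rw [hcast]
      have h0 : (0:ℝ) < (k:ℝ)-1-((i:ℝ)+1) := by linarith
      positivity
    have h2 : d*((k:ℝ)-1-((i+1:ℕ):ℝ)) ≤ d*((k:ℝ)-1-(i:ℝ)) := by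
      rw [hcast]
      nlinarith
    have h3 : g i ≤ g (i+1) := by
      rw [hg_def]
      exact one_div_le_one_div_of_le h1 h2
    rw [hvalL, hvalL, abs_of_nonneg (by linarith)]
  have hPR : (P:ℝ) = (k:ℝ)-(ν:ℝ)-2 := by
    rw [hP, Nat.cast_sub (by omega : 1 ≤ k-ν-1), Nat.cast_sub (by omega : 1 ≤ k-ν),
      Nat.cast_sub (by omega : ν ≤ k)]
    push_cast; ring
  have hgn : g P = 1/(d*((ν:ℝ)+1)) := by
    rw [hg_def]
    simp only
    rw [hPR, show (k:ℝ) - 1 - ((k:ℝ)-(ν:ℝ)-2) = (ν:ℝ)+1 by ring]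
  have hg0 : 0 ≤ g 0 := by
    have hk2 : (2:ℝ) ≤ (k:ℝ) := by exact_mod_cast (by omega : 2 ≤ k)
    rw [hg_def]
    simp only [Nat.cast_zero]
    have h0 : (0:ℝ) ≤ (k:ℝ) - 1 - 0 := by linarith
    positivity
  have hgn0 : 0 ≤ g P := by rw [hgn]; positivity
  rw [hvalL, Finset.sum_congr rfl habsL, Finset.sum_range_sub g P, abs_of_nonneg hgn0]
  have e : g P + (g P - g 0) = 2 * (g P) - g 0 := by ring
  rw [e, hgn, show (2:ℝ)/(d*((ν:ℝ)+1)) = 2*(1/(d*((ν:ℝ)+1))) by ring]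
  linarith

theorem stmt6 :
    ∃ C : ℝ, 0 < C ∧ ∃ C' : ℝ, 0 < C' ∧
      ∀ (a d : ℝ), 0 < d →
        ∀ (l : ℕ), 1 ≤ l →
          ∀ (ν : ℕ), 1 ≤ ν →
            ∀ nstar : ℝ, 0 < |nstar| → |nstar| ≤ 1 / (2 * d) →
              ∀ k : ℕ, k ∈ Finset.Icc 1 l →
                (‖(∑ j ∈ (Finset.Icc 1 l).filter
                      (fun (j : ℕ) => (ν : ℤ) < |(j : ℤ) - (k : ℤ)|),
                    Complex.exp (-2 * π * Complex.I * nstar * (a - d / 2 + d * j)) /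
                      (((a - d / 2 + d * k : ℝ) : ℂ) - ((a - d / 2 + d * j : ℝ) : ℂ)))‖ ≤
                  C / (((ν : ℝ) + 1) * d * |Real.sin (π * d * nstar)|)) ∧
                (ν = ⌊1 / (d * |nstar|)⌋₊ →
                  ‖(∑ j ∈ (Finset.Icc 1 l).filter
                      (fun (j : ℕ) => (ν : ℤ) < |(j : ℤ) - (k : ℤ)|),
                    Complex.exp (-2 * π * Complex.I * nstar * (a - d / 2 + d * j)) /
                      (((a - d / 2 + d * k : ℝ) : ℂ) - ((a - d / 2 + d * j : ℝ) : ℂ)))‖ ≤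
                    C' / d) := by
  refine ⟨4, by norm_num, 2, by norm_num, ?_⟩
  intro a d hd l hl ν hν nstar hn0 hn2 k hk
  rw [Finset.mem_Icc] at hk
  obtain ⟨hk1, hkl⟩ := hk
  set s : ℝ := |Real.sin (π * d * nstar)| with hs_def
  -- Jordan-type lower bound for s
  have hπ := Real.pi_pos
  have hdn : d * |nstar| ≤ 1/2 := by
    rw [le_div_iff₀ (by positivity)] at hn2
    nlinarith
  have hx0 : 0 < π * d * |nstar| := by positivity
  have hx2 : π * d * |nstar| ≤ π / 2 := by nlinarith
  have hJ1 : 2 * d * |nstar| ≤ Real.sin (π * d * |nstar|) := by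
    have h0 := Real.mul_le_sin (le_of_lt hx0) hx2
    have hπ' : (π:ℝ) ≠ 0 := Real.pi_ne_zero
    calc 2*d*|nstar| = 2/π*(π*d*|nstar|) := by field_simp
      _ ≤ _ := h0
  have hsin_le : Real.sin (π*d*|nstar|) ≤ s := by
    rcases abs_cases nstar with ⟨h1, _⟩ | ⟨h1, _⟩
    · rw [h1]; exact le_abs_self _
    · rw [h1, show π*d*(-nstar) = -(π*d*nstar) by ring, Real.sin_neg]
      exact neg_le_abs _
  have hJ : 2 * d * |nstar| ≤ s := le_trans hJ1 hsin_le
  have hs0 : 0 < s := lt_of_lt_of_le (by positivity) hJ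
  -- the phase factors
  set θ : ℝ := -2*π*nstar*d with hθ_def
  set w : ℂ := Complex.exp ((θ:ℝ) * Complex.I) with hw_def
  set E0 : ℂ := Complex.exp (((-2*π*nstar*(a - d/2) : ℝ)) * Complex.I) with hE0_def
  have hwabs : ‖w‖ = 1 := Complex.norm_exp_ofReal_mul_I _
  have hE0abs : ‖E0‖ = 1 := Complex.norm_exp_ofReal_mul_I _
  have hw1norm : ‖w - 1‖ = 2 * s := by
    rw [hw_def, abs_exp_theta_sub_one]
    congr 1
    rw [show θ/2 = -(π*d*nstar) by rw [hθ_def]; ring, Real.sin_neg, abs_neg]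
  have hw1 : w ≠ 1 := by
    intro h
    rw [h, sub_self] at hw1norm
    simp at hw1norm
    nlinarith
  have hexp : ∀ j : ℕ, Complex.exp (-2 * π * Complex.I * nstar * (a - d / 2 + d * j))
      = E0 * w ^ j := by
    intro j
    rw [hE0_def, hw_def, hθ_def, ← Complex.exp_nat_mul, ← Complex.exp_add]
    congr 1
    push_cast
    ring
  have hterm : ∀ j : ℕ,
      Complex.exp (-2 * π * Complex.I * nstar * (a - d / 2 + d * j)) /
        (((a - d / 2 + d * k : ℝ) : ℂ) - ((a - d / 2 + d * j : ℝ) : ℂ))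
      = ((1 / (d * ((k:ℝ) - (j:ℝ))) : ℝ) : ℂ) * (E0 * w ^ j) := by
    intro j
    have hD : (((a - d / 2 + d * k : ℝ) : ℂ) - ((a - d / 2 + d * j : ℝ) : ℂ))
        = ((d * ((k:ℝ) - (j:ℝ)) : ℝ) : ℂ) := by push_cast; ring
    rw [hexp j, hD, div_eq_mul_inv, one_div, Complex.ofReal_inv]
    ring
  -- split the sum
  have hsplit : (Finset.Icc 1 l).filter (fun (j : ℕ) => (ν : ℤ) < |(j : ℤ) - (k : ℤ)|)
      = Finset.Ico 1 (k - ν) ∪ Finset.Ico (k + ν + 1) (l + 1) := by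
    ext j
    simp only [Finset.mem_filter, Finset.mem_Icc, Finset.mem_union, Finset.mem_Ico, lt_abs]
    omega
  have hdisj : Disjoint (Finset.Ico 1 (k - ν)) (Finset.Ico (k + ν + 1) (l + 1)) := by
    refine Finset.disjoint_left.2 fun j h1 h2 => ?_
    simp only [Finset.mem_Ico] at h1 h2
    omega
  have hBval : 2 / ‖w - 1‖ = 1/s := by
    rw [hw1norm]
    field_simp
  set cc : ℕ → ℝ := fun j => 1 / (d * ((k:ℝ) - (j:ℝ))) with hcc_def
  -- right side
  have hright : ‖(∑ j ∈ Finset.Ico (k+ν+1) (l+1),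
      Complex.exp (-2 * π * Complex.I * nstar * (a - d / 2 + d * j)) /
        (((a - d / 2 + d * k : ℝ) : ℂ) - ((a - d / 2 + d * j : ℝ) : ℂ)))‖
      ≤ (1/s) * (2 / (d * ((ν:ℝ)+1))) := by
    rw [Finset.sum_congr rfl (fun j _ => hterm j), ← hBval]
    refine interval_side_bound E0 w hE0abs hwabs hw1 cc (k+ν+1) (l+1) _ ?_
    exact right_hM d hd k ν _ cc (fun j => by simp only [hcc_def])
  -- left side
  have hleft : ‖(∑ j ∈ Finset.Ico 1 (k-ν),
      Complex.exp (-2 * π * Complex.I * nstar * (a - d / 2 + d * j)) /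
        (((a - d / 2 + d * k : ℝ) : ℂ) - ((a - d / 2 + d * j : ℝ) : ℂ)))‖
      ≤ (1/s) * (2 / (d * ((ν:ℝ)+1))) := by
    rcases le_or_gt (k-ν) 1 with hke | hke
    · rw [Finset.Ico_eq_empty (by omega), Finset.sum_empty, norm_zero]
      positivity
    rw [Finset.sum_congr rfl (fun j _ => hterm j), ← hBval]
    refine interval_side_bound E0 w hE0abs hwabs hw1 cc 1 (k-ν) _ ?_
    exact left_hM d hd k ν _ hν rfl (by omega) cc (fun j => by simp only [hcc_def])
  have hmain : ‖(∑ j ∈ (Finset.Icc 1 l).filter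
        (fun (j : ℕ) => (ν : ℤ) < |(j : ℤ) - (k : ℤ)|),
      Complex.exp (-2 * π * Complex.I * nstar * (a - d / 2 + d * j)) /
        (((a - d / 2 + d * k : ℝ) : ℂ) - ((a - d / 2 + d * j : ℝ) : ℂ)))‖
      ≤ 4 / (((ν : ℝ) + 1) * d * s) := by
    rw [hsplit, Finset.sum_union hdisj]
    calc ‖_ + _‖ ≤ _ + _ := norm_add_le _ _
      _ ≤ (1/s) * (2 / (d * ((ν:ℝ)+1))) + (1/s) * (2 / (d * ((ν:ℝ)+1))) :=
          add_le_add hleft hright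
      _ = 4 / (((ν : ℝ) + 1) * d * s) := by
          have hν1 : ((ν:ℝ)+1) ≠ 0 := by positivity
          field_simp
          ring
  refine ⟨hmain, fun hν2 => le_trans hmain ?_⟩
  have h1 : 1/(d*|nstar|) < (ν:ℝ)+1 := by
    rw [hν2]
    exact_mod_cast Nat.lt_floor_add_one (1/(d*|nstar|))
  have hpos : (0:ℝ) < d*|nstar| := by positivity
  have h2 : (2:ℝ) ≤ ((ν:ℝ)+1) * s := by
    have hmul := mul_le_mul h1.le hJ (by positivity) (by positivity)
    calc (2:ℝ) = (1/(d*|nstar|))*(2*d*|nstar|) := by field_simp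
      _ ≤ _ := hmul
  have h3 : 2*d ≤ ((ν:ℝ)+1)*d*s := by nlinarith
  calc 4 / (((ν : ℝ) + 1) * d * s) ≤ 4 / (2*d) := by
        apply div_le_div_of_nonneg_left (by norm_num) (by positivity) h3
    _ = 2/d := by ring
end

section
/- Suppose U_n : L^1(0,1) → L^∞(0,1) are bounded linear operators such that each U_n maps weakly convergent sequences in L^1 to norm-convergent sequences, U_n(1_G) converges a.e. for every interval G, and there exist finite-interval sets G_k with |G_k|^{−1}·1_{G_k} →^w 1_{[0,1)} and λ·|{sup_n |U_n(1_{G_k ∩ G})| > λ}| ≤ β·|G_k ∩ G| for all λ > 0, k ≥ 1, and all intervals G in a fixed basis 𝓘. Then for every G ∈ 𝓘 and λ > 0, |{sup_n |U_n(1_G)| > λ}| ≤ C·|G|/λ, where C depends only on β. -/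
open MeasureTheory Real Set Filter

/-- Lebesgue measure restricted to `[0,1)`, modelling `L^1(0,1)`. -/
noncomputable def μ01 : Measure ℝ := volume.restrict (Set.Ico (0 : ℝ) 1)

/-- Weak convergence in `L^1(0,1)`: `∫ f_k g → ∫ f g` for every `g ∈ L^∞(0,1)`. -/
def WeakConvL1 (f : ℕ → ℝ → ℝ) (g : ℝ → ℝ) : Prop :=
  ∀ h : ℝ → ℝ, Measurable h → (∃ C : ℝ, ∀ x, |h x| ≤ C) →
    Tendsto (fun k => ∫ x, f k x * h x ∂μ01) atTop (nhds (∫ x, g x * h x ∂μ01))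

/-- A finite-interval set: a finite union of half-open intervals. -/
def FiniteIntervalSet (G : Set ℝ) : Prop :=
  ∃ s : Finset (ℝ × ℝ), G = ⋃ p ∈ s, Set.Ico p.1 p.2

/-- A basis: a countable family of subintervals of `[0,1)` containing `[0,1)`, each of
whose members admits equipartitions into `l` members of the family for infinitely many `l`. -/
def IsIntervalBasis (I : Set (Set ℝ)) : Prop :=
  I.Countable ∧ Set.Ico (0 : ℝ) 1 ∈ I ∧
  (∀ s ∈ I, ∃ a b : ℝ, 0 ≤ a ∧ a < b ∧ b ≤ 1 ∧ s = Set.Ico a b) ∧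
  ∀ a b : ℝ, Set.Ico a b ∈ I →
    {l : ℕ | 0 < l ∧ ∀ j ∈ Finset.Icc 1 l,
      Set.Ico (a + (b - a) * ((j : ℝ) - 1) / l) (a + (b - a) * (j : ℝ) / l) ∈ I}.Infinite

instance : IsFiniteMeasure μ01 := by
  constructor
  unfold μ01
  rw [Measure.restrict_apply_univ, Real.volume_Ico]
  exact ENNReal.ofReal_lt_top

lemma mu01_abs_indicator {E : Set ℝ} (hE : MeasurableSet E) :
    ∫ y, |Set.indicator E (1 : ℝ → ℝ) y| ∂μ01 = (μ01 E).toReal := by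
  have h1 : (fun y => |Set.indicator E (1 : ℝ → ℝ) y|) = Set.indicator E (1 : ℝ → ℝ) := by
    funext y
    exact abs_of_nonneg (Set.indicator_nonneg (fun _ _ => zero_le_one) y)
  rw [h1, MeasureTheory.integral_indicator hE]
  simp
  rfl

lemma repr_functional (φ : (ℝ → ℝ) → ℝ)
    (hadd : ∀ f g : ℝ → ℝ, φ (f + g) = φ f + φ g)
    {M : ℝ} (hM : 0 ≤ M)
    (hb : ∀ f : ℝ → ℝ, Integrable f μ01 → |φ f| ≤ M * ∫ y, |f y| ∂μ01) :
    ∃ h : ℝ → ℝ, Measurable h ∧ (∀ y, |h y| ≤ M) ∧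
      ∀ E : Set ℝ, MeasurableSet E → φ (Set.indicator E 1) = ∫ y in E, h y ∂μ01 := by
  classical
  have hφ0 : φ 0 = 0 := by
    have h0 := hadd 0 0
    rw [add_zero] at h0
    linarith
  have hind_empty : Set.indicator (∅ : Set ℝ) (1 : ℝ → ℝ) = 0 := by
    funext y; simp
  have hind_union : ∀ s t : Set ℝ, Disjoint s t →
      Set.indicator (s ∪ t) (1 : ℝ → ℝ) = Set.indicator s 1 + Set.indicator t 1 := by
    intro s t hst
    funext y
    by_cases h1 : y ∈ s
    · have h2 : y ∉ t := fun h2 => Set.disjoint_left.1 hst h1 h2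
      simp [Set.indicator_apply, h1, h2]
    · by_cases h2 : y ∈ t <;> simp [Set.indicator_apply, h1, h2]
  have hbE : ∀ E : Set ℝ, MeasurableSet E → |φ (Set.indicator E 1)| ≤ M * (μ01 E).toReal := by
    intro E hE
    have h1 := hb (Set.indicator E (1 : ℝ → ℝ)) ((integrable_const (1 : ℝ)).indicator hE)
    rwa [mu01_abs_indicator hE] at h1
  have hiU : ∀ ⦃e : ℕ → Set ℝ⦄, (∀ i, MeasurableSet (e i)) → Pairwise (Function.onFun Disjoint e) →
      HasSum (fun i => if MeasurableSet (e i) then φ (Set.indicator (e i) 1) else 0)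
        (if MeasurableSet (⋃ i, e i) then φ (Set.indicator (⋃ i, e i) 1) else 0) := by
    intro e h1 h2
    have he1 : (fun i => if MeasurableSet (e i) then φ (Set.indicator (e i) 1) else 0)
        = fun i => φ (Set.indicator (e i) 1) := funext fun i => if_pos (h1 i)
    rw [he1, if_pos (MeasurableSet.iUnion h1)]
    show Filter.Tendsto (fun s : Finset ℕ => ∑ i ∈ s, φ (Set.indicator (e i) 1)) atTop
      (nhds (φ (Set.indicator (⋃ i, e i) 1)))
    have hsum : ∀ s : Finset ℕ,
        ∑ i ∈ s, φ (Set.indicator (e i) 1) = φ (Set.indicator (⋃ i ∈ s, e i) 1) := by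
      intro s
      induction s using Finset.induction_on with
      | empty => simp [hφ0, hind_empty]
      | @insert a s ha ih =>
        have hdisj : Disjoint (e a) (⋃ i ∈ s, e i) :=
          Set.disjoint_iUnion₂_right.2 fun i hi => h2 (fun hai => ha (hai ▸ hi))
        rw [Finset.sum_insert ha, ih, Finset.set_biUnion_insert,
          hind_union _ _ hdisj, hadd]
    have hAmeas : ∀ s : Finset ℕ, MeasurableSet (⋃ i ∈ s, e i) :=
      fun s => s.measurableSet_biUnion (fun i _ => h1 i)
    have hsplit : ∀ s : Finset ℕ,
        φ (Set.indicator (⋃ i, e i) 1)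
          = φ (Set.indicator (⋃ i ∈ s, e i) 1)
            + φ (Set.indicator ((⋃ i, e i) \ ⋃ i ∈ s, e i) 1) := by
      intro s
      rw [← hadd, ← hind_union _ _ Set.disjoint_sdiff_right,
        Set.union_diff_cancel (Set.iUnion₂_subset fun i _ => Set.subset_iUnion e i)]
    have htot : (∑' i, μ01 (e i)) ≠ ⊤ := by
      rw [← measure_iUnion h2 h1]
      exact (measure_lt_top μ01 _).ne
    have htail := ENNReal.tendsto_tsum_compl_atTop_zero htot
    have hg : Tendsto (fun s : Finset ℕ =>
        M * (∑' i : {x : ℕ // x ∉ s}, μ01 (e ↑i)).toReal) atTop (nhds 0) := by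
      have h2' := (ENNReal.tendsto_toReal ENNReal.zero_ne_top).comp htail
      simpa using h2'.const_mul M
    rw [tendsto_iff_dist_tendsto_zero]
    refine squeeze_zero (fun s => dist_nonneg) (fun s => ?_) hg
    rw [Real.dist_eq, hsum s]
    have htailne : (∑' i : {x : ℕ // x ∉ s}, μ01 (e ↑i)) ≠ ⊤ :=
      ((ENNReal.tsum_comp_le_tsum_of_injective Subtype.val_injective
        (fun i => μ01 (e i))).trans_lt (lt_of_le_of_ne le_top htot)).ne
    calc |φ (Set.indicator (⋃ i ∈ s, e i) 1) - φ (Set.indicator (⋃ i, e i) 1)|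
        = |φ (Set.indicator ((⋃ i, e i) \ ⋃ i ∈ s, e i) 1)| := by
          rw [hsplit s, sub_add_cancel_left, abs_neg]
      _ ≤ M * (μ01 ((⋃ i, e i) \ ⋃ i ∈ s, e i)).toReal :=
          hbE _ ((MeasurableSet.iUnion h1).diff (hAmeas s))
      _ ≤ M * (∑' i : {x : ℕ // x ∉ s}, μ01 (e ↑i)).toReal := by
          refine mul_le_mul_of_nonneg_left (ENNReal.toReal_mono htailne ?_) hM
          refine (measure_mono ?_).trans (measure_iUnion_le _)
          rintro x ⟨hx1, hx2⟩
          simp only [Set.mem_iUnion] at hx1 ⊢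
          obtain ⟨i, hi⟩ := hx1
          exact ⟨⟨i, fun his => hx2 (Set.mem_biUnion his hi)⟩, hi⟩
  let ν : MeasureTheory.SignedMeasure ℝ :=
    { measureOf' := fun E => if MeasurableSet E then φ (Set.indicator E 1) else 0
      empty' := by
        show (if MeasurableSet (∅ : Set ℝ) then φ (Set.indicator ∅ 1) else 0) = 0
        rw [if_pos MeasurableSet.empty, hind_empty, hφ0]
      not_measurable' := fun i hi => if_neg hi
      m_iUnion' := hiU }
  have hν : ∀ E : Set ℝ, MeasurableSet E → ν E = φ (Set.indicator E 1) :=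
    fun E hE => if_pos hE
  have hac : ν ≪ᵥ μ01.toENNRealVectorMeasure := by
    refine MeasureTheory.VectorMeasure.AbsolutelyContinuous.mk fun E hE h0 => ?_
    rw [MeasureTheory.Measure.toENNRealVectorMeasure_apply_measurable hE] at h0
    have h1 := hbE E hE
    rw [h0, ENNReal.toReal_zero, mul_zero] at h1
    rw [hν E hE]
    exact abs_eq_zero.mp (le_antisymm h1 (abs_nonneg _))
  have hrepr := MeasureTheory.SignedMeasure.withDensityᵥ_rnDeriv_eq ν μ01 hac
  have hf₀m : Measurable (ν.rnDeriv μ01) := MeasureTheory.SignedMeasure.measurable_rnDeriv ν μ01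
  have hf₀i : Integrable (ν.rnDeriv μ01) μ01 :=
    MeasureTheory.SignedMeasure.integrable_rnDeriv ν μ01
  have hEint : ∀ E : Set ℝ, MeasurableSet E →
      φ (Set.indicator E 1) = ∫ y in E, ν.rnDeriv μ01 y ∂μ01 := by
    intro E hE
    rw [← hν E hE]
    conv_lhs => rw [← hrepr]
    rw [MeasureTheory.withDensityᵥ_apply hf₀i hE]
  have hup : ∀ᵐ y ∂μ01, ν.rnDeriv μ01 y ≤ M := by
    have h1 : 0 ≤ᵐ[μ01] fun y => M - ν.rnDeriv μ01 y := by
      refine MeasureTheory.ae_nonneg_of_forall_setIntegral_nonneg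
        ((integrable_const M).sub hf₀i) fun E hE _ => ?_
      rw [MeasureTheory.integral_sub (integrable_const M).integrableOn hf₀i.integrableOn,
        MeasureTheory.setIntegral_const, smul_eq_mul, measureReal_def]
      have h2 : ∫ y in E, ν.rnDeriv μ01 y ∂μ01 ≤ M * (μ01 E).toReal := by
        rw [← hEint E hE]
        exact (le_abs_self _).trans (hbE E hE)
      have h3 : (μ01 E).toReal * M = M * (μ01 E).toReal := mul_comm _ _
      linarith
    filter_upwards [h1] with y hy
    have : (0 : ℝ) ≤ M - ν.rnDeriv μ01 y := hy
    linarith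
  have hlo : ∀ᵐ y ∂μ01, -M ≤ ν.rnDeriv μ01 y := by
    have h1 : 0 ≤ᵐ[μ01] fun y => ν.rnDeriv μ01 y + M := by
      refine MeasureTheory.ae_nonneg_of_forall_setIntegral_nonneg
        (hf₀i.add (integrable_const M)) fun E hE _ => ?_
      rw [MeasureTheory.integral_add hf₀i.integrableOn (integrable_const M).integrableOn,
        MeasureTheory.setIntegral_const, smul_eq_mul, measureReal_def]
      have h2 : -(M * (μ01 E).toReal) ≤ ∫ y in E, ν.rnDeriv μ01 y ∂μ01 := by
        rw [← hEint E hE]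
        have h5 := hbE E hE
        have h4 := neg_abs_le (φ (Set.indicator E 1))
        linarith
      have h3 : (μ01 E).toReal * M = M * (μ01 E).toReal := mul_comm _ _
      linarith
    filter_upwards [h1] with y hy
    have : (0 : ℝ) ≤ ν.rnDeriv μ01 y + M := hy
    linarith
  refine ⟨fun y => max (-M) (min (ν.rnDeriv μ01 y) M),
    measurable_const.max (hf₀m.min measurable_const),
    fun y => abs_le.2 ⟨le_max_left _ _, max_le (neg_le_self hM) (min_le_right _ _)⟩, ?_⟩
  intro E hE
  rw [hEint E hE]
  refine MeasureTheory.setIntegral_congr_ae hE ?_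
  filter_upwards [hup, hlo] with y h1 h2 _
  rw [min_eq_left h1, max_eq_right h2]

lemma final_aux (S : Set ℝ) (B : ℕ → Set ℝ) (R : ℝ) (hR : 0 ≤ R)
    (hsub : S ⊆ ⋃ K : ℕ, ⋂ k, ⋂ (_ : K ≤ k), B k)
    (hBsub : ∀ k, B k ⊆ Set.Ico (0 : ℝ) 1)
    (hbd : ∀ K : ℕ, ∀ ε : ℝ, 0 < ε → ∃ k, K ≤ k ∧ (volume (B k)).toReal ≤ R + ε) :
    (volume S).toReal ≤ R := by
  have hBfin : ∀ k, volume (B k) ≠ ⊤ := fun k =>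
    ((measure_mono (hBsub k)).trans_lt
      (by rw [Real.volume_Ico]; exact ENNReal.ofReal_lt_top)).ne
  have hDmono : Monotone (fun K : ℕ => ⋂ k, ⋂ (_ : K ≤ k), B k) :=
    fun K1 K2 h12 => Set.iInter₂_mono' fun k hk => ⟨k, h12.trans hk, subset_rfl⟩
  have hDfin : ∀ K : ℕ, volume (⋂ k, ⋂ (_ : K ≤ k), B k) ≠ ⊤ := by
    intro K
    exact ((measure_mono ((Set.iInter_subset _ K).trans (Set.iInter_subset _ le_rfl))).trans_lt
      (lt_top_iff_ne_top.2 (hBfin K))).ne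
  have hDle : ∀ K : ℕ, (volume (⋂ k, ⋂ (_ : K ≤ k), B k)).toReal ≤ R := by
    intro K
    by_contra hcon
    push_neg at hcon
    obtain ⟨k, hk, hkB⟩ :=
      hbd K (((volume (⋂ k, ⋂ (_ : K ≤ k), B k)).toReal - R) / 2) (by linarith)
    have h1 : volume (⋂ k, ⋂ (_ : K ≤ k), B k) ≤ volume (B k) :=
      measure_mono ((Set.iInter_subset _ k).trans (Set.iInter_subset _ hk))
    have h2 := ENNReal.toReal_mono (hBfin k) h1
    linarith
  have hU : volume S ≤ ⨆ K : ℕ, volume (⋂ k, ⋂ (_ : K ≤ k), B k) := by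
    refine (measure_mono hsub).trans ?_
    rw [hDmono.measure_iUnion]
  have hR' : volume S ≤ ENNReal.ofReal R := by
    refine hU.trans (iSup_le fun K => ?_)
    rw [← ENNReal.ofReal_toReal (hDfin K)]
    exact ENNReal.ofReal_le_ofReal (hDle K)
  calc (volume S).toReal ≤ (ENNReal.ofReal R).toReal :=
        ENNReal.toReal_mono ENNReal.ofReal_ne_top hR'
    _ = R := ENNReal.toReal_ofReal hR

theorem stmt17 (β : ℝ) (hβ : 0 < β) :
    ∃ C : ℝ, 0 < C ∧
      ∀ U : ℕ → (ℝ → ℝ) → (ℝ → ℝ),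
        (∀ n f g, U n (f + g) = U n f + U n g) →
        (∀ n (c : ℝ) f, U n (c • f) = c • U n f) →
        (∀ n, ∃ M : ℝ, ∀ f : ℝ → ℝ, Integrable f μ01 →
          ∀ x ∈ Set.Ico (0 : ℝ) 1, |U n f x| ≤ M * ∫ y, |f y| ∂μ01) →
        (∀ n (f : ℕ → ℝ → ℝ) (g : ℝ → ℝ), WeakConvL1 f g →
          Tendsto (fun k => ∫ x, |U n (f k) x - U n g x| ∂μ01) atTop (nhds 0)) →
        (∀ a b : ℝ, ∃ h : ℝ → ℝ, ∀ᵐ x ∂μ01,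
          Tendsto (fun n => U n (Set.indicator (Set.Ico a b) 1) x) atTop (nhds (h x))) →
        ∀ I : Set (Set ℝ), IsIntervalBasis I →
        ∀ G' : ℕ → Set ℝ,
          (∀ k, FiniteIntervalSet (G' k)) →
          (∀ k, 0 < (volume (G' k)).toReal) →
          WeakConvL1
            (fun k x => ((volume (G' k)).toReal)⁻¹ * Set.indicator (G' k) 1 x)
            (Set.indicator (Set.Ico (0 : ℝ) 1) 1) →
          (∀ G ∈ I, ∀ k : ℕ, ∀ lam : ℝ, 0 < lam →
            lam * (volume {x ∈ Set.Ico (0 : ℝ) 1 |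
                ∃ n : ℕ, lam < |U n (Set.indicator (G' k ∩ G) 1) x|}).toReal ≤
              β * (volume (G' k ∩ G)).toReal) →
          ∀ G ∈ I, ∀ lam : ℝ, 0 < lam →
            (volume {x ∈ Set.Ico (0 : ℝ) 1 |
                ∃ n : ℕ, lam < |U n (Set.indicator G 1) x|}).toReal ≤
              C * (volume G).toReal / lam := by
  refine ⟨2 * β, by linarith, ?_⟩
  intro U hadd _hsmul hbound _hcompact _haecv I hI G' hGfin hGpos hweak hw11 G hG lam hlam
  obtain ⟨a, b, ha0, hab, hb1, hGeq⟩ := hI.2.2.1 G hG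
  have hGmeas : MeasurableSet G := by rw [hGeq]; exact measurableSet_Ico
  have hGsub : G ⊆ Set.Ico (0 : ℝ) 1 := by rw [hGeq]; exact Set.Ico_subset_Ico ha0 hb1
  have hG'meas : ∀ k, MeasurableSet (G' k) := by
    intro k
    obtain ⟨s, hs⟩ := hGfin k
    rw [hs]
    exact s.measurableSet_biUnion fun p _ => measurableSet_Ico
  have hμvol : ∀ E : Set ℝ, MeasurableSet E → E ⊆ Set.Ico (0 : ℝ) 1 → μ01 E = volume E := by
    intro E hE hsubE
    unfold μ01
    rw [Measure.restrict_apply hE, Set.inter_eq_self_of_subset_left hsubE]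
  -- the key convergence statement derived from the weak convergence hypothesis
  have key : ∀ (h : ℝ → ℝ) (Ch : ℝ), Measurable h → (∀ y, |h y| ≤ Ch) →
      Tendsto (fun k => ((volume (G' k)).toReal)⁻¹ * ∫ y in G' k ∩ G, h y ∂μ01) atTop
        (nhds (∫ y in G, h y ∂μ01)) := by
    intro h Ch hm hCh
    have hCh0 : 0 ≤ Ch := le_trans (abs_nonneg _) (hCh 0)
    have hmeas2 : Measurable fun y => Set.indicator G 1 y * h y :=
      (measurable_const.indicator hGmeas).mul hm
    have hbd2 : ∀ y, |Set.indicator G 1 y * h y| ≤ Ch := by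
      intro y
      by_cases hyG : y ∈ G
      · rw [Set.indicator_of_mem hyG]
        simpa using hCh y
      · rw [Set.indicator_of_notMem hyG, zero_mul, abs_zero]
        exact hCh0
    have H := hweak (fun y => Set.indicator G 1 y * h y) hmeas2 ⟨Ch, hbd2⟩
    beta_reduce at H
    have hptw2 : ∀ x : ℝ,
        Set.indicator (Set.Ico (0:ℝ) 1) (1 : ℝ → ℝ) x * (Set.indicator G (1 : ℝ → ℝ) x * h x)
          = Set.indicator G h x := by
      intro x
      by_cases h2 : x ∈ G
      · rw [Set.indicator_of_mem h2, Set.indicator_of_mem (hGsub h2), Set.indicator_of_mem h2]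
        simp
      · rw [Set.indicator_of_notMem h2, Set.indicator_of_notMem h2]
        ring
    have hR : (∫ x, Set.indicator (Set.Ico (0:ℝ) 1) 1 x * (Set.indicator G 1 x * h x) ∂μ01)
        = ∫ y in G, h y ∂μ01 := by
      rw [← MeasureTheory.integral_indicator hGmeas]
      exact MeasureTheory.integral_congr_ae (Filter.Eventually.of_forall hptw2)
    have hLk : ∀ k : ℕ, (∫ x, (((volume (G' k)).toReal)⁻¹ * Set.indicator (G' k) 1 x) *
        (Set.indicator G 1 x * h x) ∂μ01)
        = ((volume (G' k)).toReal)⁻¹ * ∫ y in G' k ∩ G, h y ∂μ01 := by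
      intro k
      have hptw : ∀ x : ℝ, (((volume (G' k)).toReal)⁻¹ * Set.indicator (G' k) (1 : ℝ → ℝ) x) *
          (Set.indicator G (1 : ℝ → ℝ) x * h x)
          = ((volume (G' k)).toReal)⁻¹ * Set.indicator (G' k ∩ G) h x := by
        intro x
        by_cases h1 : x ∈ G' k
        · by_cases h2 : x ∈ G
          · rw [Set.indicator_of_mem h1, Set.indicator_of_mem h2,
              Set.indicator_of_mem (Set.mem_inter h1 h2)]
            simp
          · rw [Set.indicator_of_notMem h2,
              Set.indicator_of_notMem (fun hx : x ∈ G' k ∩ G => h2 hx.2)]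
            ring
        · rw [Set.indicator_of_notMem h1,
            Set.indicator_of_notMem (fun hx : x ∈ G' k ∩ G => h1 hx.1)]
          ring
      rw [← MeasureTheory.integral_indicator ((hG'meas k).inter hGmeas),
        ← MeasureTheory.integral_const_mul]
      exact MeasureTheory.integral_congr_ae (Filter.Eventually.of_forall hptw)
    rw [hR] at H
    exact H.congr hLk
  -- the normalized measures of G' k ∩ G converge to the measure of G
  have hc : Tendsto (fun k => ((volume (G' k)).toReal)⁻¹ * (volume (G' k ∩ G)).toReal) atTop
      (nhds ((volume G).toReal)) := by
    have H := key (fun _ => (1:ℝ)) 1 measurable_const (fun y => by norm_num)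
    beta_reduce at H
    have e1 : ∀ k : ℕ, (∫ _ in G' k ∩ G, (1:ℝ) ∂μ01) = (volume (G' k ∩ G)).toReal := by
      intro k
      rw [MeasureTheory.setIntegral_const, smul_eq_mul, mul_one, measureReal_def,
        hμvol _ ((hG'meas k).inter hGmeas) (fun x hx => hGsub hx.2)]
    have e2 : (∫ _ in G, (1:ℝ) ∂μ01) = (volume G).toReal := by
      rw [MeasureTheory.setIntegral_const, smul_eq_mul, mul_one, measureReal_def, hμvol _ hGmeas hGsub]
    rw [e2] at H
    exact H.congr fun k => by rw [e1 k]
  -- pointwise convergence of the sampled operators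
  have hptconv : ∀ n : ℕ, ∀ x : ℝ, x ∈ Set.Ico (0:ℝ) 1 →
      Tendsto (fun k => ((volume (G' k)).toReal)⁻¹ * U n (Set.indicator (G' k ∩ G) 1) x) atTop
        (nhds (U n (Set.indicator G 1) x)) := by
    intro n x hx
    obtain ⟨M, hM⟩ := hbound n
    have hM' : ∀ f : ℝ → ℝ, Integrable f μ01 → |U n f x| ≤ max M 0 * ∫ y, |f y| ∂μ01 := by
      intro f hf
      refine (hM f hf x hx).trans (mul_le_mul_of_nonneg_right (le_max_left _ _)
        (MeasureTheory.integral_nonneg fun y => abs_nonneg _))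
    obtain ⟨h, hm, hb, hrep⟩ := repr_functional (fun f => U n f x)
      (fun f g => by show U n (f + g) x = U n f x + U n g x; rw [hadd]; rfl) (le_max_right M 0) hM'
    have hrep' : ∀ E : Set ℝ, MeasurableSet E →
        U n (Set.indicator E 1) x = ∫ y in E, h y ∂μ01 := hrep
    have H := key h (max M 0) hm hb
    rw [← hrep' G hGmeas] at H
    exact H.congr fun k => by rw [← hrep' _ ((hG'meas k).inter hGmeas)]
  -- final assembly
  have hRnn : 0 ≤ 2 * β / lam * (volume G).toReal :=
    mul_nonneg (div_nonneg (by linarith) hlam.le) ENNReal.toReal_nonneg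
  have heq : 2 * β * (volume G).toReal / lam = 2 * β / lam * (volume G).toReal := by ring
  rw [heq]
  refine final_aux _ (fun k => {x ∈ Set.Ico (0:ℝ) 1 | ∃ n : ℕ,
      lam * (volume (G' k)).toReal / 2 < |U n (Set.indicator (G' k ∩ G) 1) x|}) _ hRnn ?_ ?_ ?_
  · -- inclusion into the increasing union
    rintro x ⟨hx, n, hn⟩
    have habs := (hptconv n x hx).abs
    have hev : ∀ᶠ k in atTop,
        lam / 2 < |((volume (G' k)).toReal)⁻¹ * U n (Set.indicator (G' k ∩ G) 1) x| :=
      habs.eventually (eventually_gt_nhds (by linarith))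
    obtain ⟨K, hK⟩ := Filter.eventually_atTop.1 hev
    refine Set.mem_iUnion.2 ⟨K, Set.mem_iInter.2 fun k => Set.mem_iInter.2 fun hk => ?_⟩
    refine ⟨hx, n, ?_⟩
    have h1 := hK k hk
    have hck := hGpos k
    rw [abs_mul, abs_of_nonneg (inv_nonneg.2 hck.le), inv_mul_eq_div] at h1
    have h2 := (lt_div_iff₀ hck).1 h1
    have h3 : lam / 2 * (volume (G' k)).toReal = lam * (volume (G' k)).toReal / 2 := by ring
    linarith
  · exact fun k x hx => hx.1
  · -- the quantitative bound
    intro K ε hε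
    have ht : Tendsto (fun k => 2 * β / lam *
        (((volume (G' k)).toReal)⁻¹ * (volume (G' k ∩ G)).toReal)) atTop
        (nhds (2 * β / lam * (volume G).toReal)) := hc.const_mul _
    have hev := ht.eventually_lt_const
      (by linarith : 2 * β / lam * (volume G).toReal < 2 * β / lam * (volume G).toReal + ε)
    obtain ⟨k, hkK, hklt⟩ := ((eventually_ge_atTop K).and hev).exists
    refine ⟨k, hkK, ?_⟩
    have hck := hGpos k
    have hw := hw11 G hG k (lam * (volume (G' k)).toReal / 2)
      (div_pos (mul_pos hlam hck) two_pos)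
    set T := (volume {x ∈ Set.Ico (0:ℝ) 1 | ∃ n : ℕ,
      lam * (volume (G' k)).toReal / 2 < |U n (Set.indicator (G' k ∩ G) 1) x|}).toReal with hT
    have h2 : T * (lam * (volume (G' k)).toReal / 2) ≤ β * (volume (G' k ∩ G)).toReal := by
      rw [mul_comm]; exact hw
    have h3 : T ≤ 2 * β / lam * (((volume (G' k)).toReal)⁻¹ * (volume (G' k ∩ G)).toReal) := by
      have h4 := (le_div_iff₀ (div_pos (mul_pos hlam hck) two_pos)).2 h2
      refine h4.trans_eq ?_
      field_simp
    exact h3.trans hklt.le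
end
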